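/- arXiv:2003.05308 — 12 statements merged into one kernel-verified Lean document; each statement's English description precedes it below -/
import Mathlib

section
/- Let V be a vector space over a field k and φ a finite potent endomorphism of V with index r, and let V = U_φ ⊕ W_φ be the AST-decomposition (φ nilpotent on U_φ, an automorphism of the finite-dimensional W_φ). If f is an endomorphism of V such that f ∘ φ^r = φ^r ∘ f, then W_φ and U_φ are invariant under f. -/
/-- AST-decomposition lemma: if `f` commutes with `φ ^ r`, where `r` is the index of the
finite potent endomorphism `φ`, then `W_φ` and `U_φ` are invariant under `f`. -/
theorem stmt0 {k V : Type*} [Field k] [AddCommGroup V] [Module k V]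
    (φ : Module.End k V) (U W : Submodule k V) (r : ℕ)
    (hcompl : IsCompl U W)
    (hUinv : ∀ u ∈ U, φ u ∈ U) (hWinv : ∀ w ∈ W, φ w ∈ W)
    (hfin : FiniteDimensional k W)
    (hnil : ∀ u ∈ U, (φ ^ r) u = 0)
    (hmin : ∀ s < r, ∃ u ∈ U, (φ ^ s) u ≠ 0)
    (hWsurj : ∀ w ∈ W, ∃ w' ∈ W, φ w' = w)
    (hWinj : ∀ w ∈ W, φ w = 0 → w = 0)
    (f : Module.End k V) (hf : f * φ ^ r = φ ^ r * f) :
    (∀ w ∈ W, f w ∈ W) ∧ (∀ u ∈ U, f u ∈ U) := by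
  -- φ^n preserves W
  have hWn : ∀ n : ℕ, ∀ w ∈ W, (φ ^ n) w ∈ W := by
    intro n
    induction n with
    | zero => intro w hw; simpa using hw
    | succ n ih =>
        intro w hw
        have : (φ ^ (n + 1)) w = (φ ^ n) (φ w) := by
          rw [pow_succ, Module.End.mul_apply]
        rw [this]
        exact ih _ (hWinv w hw)
  -- φ^n injective on W
  have hWinjn : ∀ n : ℕ, ∀ w ∈ W, (φ ^ n) w = 0 → w = 0 := by
    intro n
    induction n with
    | zero => intro w _ h; simpa using h
    | succ n ih =>
        intro w hw h
        have h' : (φ ^ n) (φ w) = 0 := by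
          rw [← Module.End.mul_apply, ← pow_succ]; exact h
        exact hWinj w hw (ih _ (hWinv w hw) h')
  -- φ^n surjective on W
  have hWsn : ∀ n : ℕ, ∀ w ∈ W, ∃ w' ∈ W, (φ ^ n) w' = w := by
    intro n
    induction n with
    | zero => intro w hw; exact ⟨w, hw, by simp⟩
    | succ n ih =>
        intro w hw
        obtain ⟨w', hw', hww'⟩ := ih w hw
        obtain ⟨w'', hw'', hww''⟩ := hWsurj w' hw'
        refine ⟨w'', hw'', ?_⟩
        rw [pow_succ, Module.End.mul_apply, hww'', hww']
  -- decomposition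
  have hdec : ∀ v : V, ∃ u ∈ U, ∃ w ∈ W, v = u + w := by
    intro v
    have hv : v ∈ U ⊔ W := by rw [hcompl.sup_eq_top]; trivial
    obtain ⟨u, hu, w, hw, huw⟩ := Submodule.mem_sup.mp hv
    exact ⟨u, hu, w, hw, huw.symm⟩
  -- range of φ^r lies in W
  have himW : ∀ v : V, (φ ^ r) v ∈ W := by
    intro v
    obtain ⟨u, hu, w, hw, rfl⟩ := hdec v
    rw [map_add, hnil u hu, zero_add]
    exact hWn r w hw
  constructor
  · intro w hw
    obtain ⟨w', hw', hww'⟩ := hWsn r w hw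
    have : f w = (φ ^ r) (f w') := by
      rw [← hww', ← Module.End.mul_apply, hf, Module.End.mul_apply]
    rw [this]
    exact himW _
  · intro u hu
    have h0 : (φ ^ r) (f u) = 0 := by
      rw [← Module.End.mul_apply, ← hf, Module.End.mul_apply, hnil u hu, map_zero]
    obtain ⟨u', hu', w', hw', hfu⟩ := hdec (f u)
    have hw0 : (φ ^ r) w' = 0 := by
      have := h0
      rw [hfu, map_add, hnil u' hu', zero_add] at this
      exact this
    have : w' = 0 := hWinjn r w' hw' hw0
    rw [hfu, this, add_zero]
    exact hu'
end

section
/- Let φ be a finite potent endomorphism of a k-vector space V with index r and AST-decomposition V = W_φ ⊕ U_φ. An endomorphism ψ of V satisfies φ∘ψ∘φ = φ and ψ∘φ^r = φ^r∘ψ if and only if W_φ and U_φ are ψ-invariant, ψ|_{W_φ} = (φ|_{W_φ})^{-1}, and φ∘ψ∘φ = φ holds on U_φ (i.e., ψ|_{U_φ} is a generalized inverse of φ|_{U_φ}). -/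
/-- Characterization of G-Drazin inverses of a finite potent endomorphism:
`ψ` satisfies `φψφ = φ` and `ψφ^r = φ^r ψ` iff `W_φ` and `U_φ` are `ψ`-invariant,
`ψ|_{W_φ} = (φ|_{W_φ})⁻¹`, and `ψ|_{U_φ}` is a generalized inverse of `φ|_{U_φ}`. -/
theorem stmt1 {k V : Type*} [Field k] [AddCommGroup V] [Module k V]
    (φ : Module.End k V) (U W : Submodule k V) (r : ℕ)
    (hcompl : IsCompl U W)
    (hUinv : ∀ u ∈ U, φ u ∈ U) (hWinv : ∀ w ∈ W, φ w ∈ W)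
    (hfin : FiniteDimensional k W)
    (hnil : ∀ u ∈ U, (φ ^ r) u = 0)
    (hmin : ∀ s < r, ∃ u ∈ U, (φ ^ s) u ≠ 0)
    (hWsurj : ∀ w ∈ W, ∃ w' ∈ W, φ w' = w)
    (hWinj : ∀ w ∈ W, φ w = 0 → w = 0)
    (ψ : Module.End k V) :
    (φ * ψ * φ = φ ∧ ψ * φ ^ r = φ ^ r * ψ) ↔
      ((∀ w ∈ W, ψ w ∈ W) ∧ (∀ u ∈ U, ψ u ∈ U) ∧
        (∀ w ∈ W, φ (ψ w) = w) ∧ (∀ u ∈ U, φ (ψ (φ u)) = φ u)) := by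
  -- general decomposition
  have hdec : ∀ v : V, ∃ u ∈ U, ∃ w ∈ W, u + w = v := by
    intro v
    have : v ∈ U ⊔ W := by rw [hcompl.sup_eq_top]; trivial
    obtain ⟨u, hu, w, hw, h⟩ := Submodule.mem_sup.mp this
    exact ⟨u, hu, w, hw, h⟩
  have hWn : ∀ n : ℕ, ∀ w ∈ W, (φ ^ n) w ∈ W := by
    intro n
    induction n with
    | zero => intro w hw; simpa using hw
    | succ n ih =>
      intro w hw
      rw [pow_succ, Module.End.mul_apply]
      exact ih _ (hWinv w hw)
  have hWsurjn : ∀ n : ℕ, ∀ w ∈ W, ∃ w' ∈ W, (φ ^ n) w' = w := by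
    intro n
    induction n with
    | zero => intro w hw; exact ⟨w, hw, by simp⟩
    | succ n ih =>
      intro w hw
      obtain ⟨w', hw', h1⟩ := hWsurj w hw
      obtain ⟨w'', hw'', h2⟩ := ih w' hw'
      exact ⟨w'', hw'', by rw [pow_succ', Module.End.mul_apply, h2, h1]⟩
  have hWinjn : ∀ n : ℕ, ∀ w ∈ W, (φ ^ n) w = 0 → w = 0 := by
    intro n
    induction n with
    | zero => intro w hw h; simpa using h
    | succ n ih =>
      intro w hw h
      rw [pow_succ, Module.End.mul_apply] at h
      exact hWinj w hw (by
        have := ih (φ w) (hWinv w hw) h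
        exact this) |>.symm ▸ rfl
  constructor
  · rintro ⟨h1, h2⟩
    have hψU : ∀ u ∈ U, ψ u ∈ U := by
      intro u hu
      obtain ⟨u', hu', w, hw, hsum⟩ := hdec (ψ u)
      have hz : (φ ^ r) (ψ u) = 0 := by
        have h := congrArg (fun f : Module.End k V => f u) h2
        simp only [Module.End.mul_apply] at h
        rw [← h, hnil u hu, map_zero]
      rw [← hsum, map_add, hnil u' hu'] at hz
      simp only [zero_add] at hz
      have : w = 0 := hWinjn r w hw hz
      rw [← hsum, this, add_zero]; exact hu'
    have hψW : ∀ w ∈ W, ψ w ∈ W := by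
      intro w hw
      obtain ⟨w', hw', hw'eq⟩ := hWsurjn r w hw
      obtain ⟨u, hu, w'', hw'', hsum⟩ := hdec (ψ w')
      have h := congrArg (fun f : Module.End k V => f w') h2
      simp only [Module.End.mul_apply] at h
      rw [hw'eq] at h
      rw [h, ← hsum, map_add, hnil u hu, zero_add]
      exact hWn r w'' hw''
    refine ⟨hψW, hψU, ?_, ?_⟩
    · intro w hw
      obtain ⟨w', hw', hweq⟩ := hWsurj w hw
      have h := congrArg (fun f : Module.End k V => f w') h1
      simp only [Module.End.mul_apply] at h
      rw [hweq] at h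
      exact h
    · intro u hu
      have h := congrArg (fun f : Module.End k V => f u) h1
      simpa only [Module.End.mul_apply] using h
  · rintro ⟨hψW, hψU, hinvW, hgen⟩
    have hψφW : ∀ w ∈ W, ψ (φ w) = w := by
      intro w hw
      have h1 : φ (ψ (φ w)) = φ w := hinvW (φ w) (hWinv w hw)
      have h2 : ψ (φ w) - w ∈ W := W.sub_mem (hψW (φ w) (hWinv w hw)) hw
      have h3 : φ (ψ (φ w) - w) = 0 := by rw [map_sub, h1, sub_self]
      exact sub_eq_zero.mp (hWinj _ h2 h3)
    have hcomm : ∀ n : ℕ, ∀ w ∈ W, ψ ((φ ^ n) w) = (φ ^ n) (ψ w) := by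
      intro n w hw
      cases n with
      | zero => simp
      | succ n =>
        have e1 : ψ ((φ ^ (n + 1)) w) = (φ ^ n) w := by
          rw [pow_succ', Module.End.mul_apply]
          exact hψφW _ (hWn n w hw)
        have e2 : (φ ^ (n + 1)) (ψ w) = (φ ^ n) w := by
          rw [pow_succ, Module.End.mul_apply, hinvW w hw]
        rw [e1, e2]
    constructor
    · ext v
      obtain ⟨u, hu, w, hw, hsum⟩ := hdec v
      simp only [Module.End.mul_apply]
      rw [← hsum, map_add, map_add, map_add, hgen u hu,
        hinvW (φ w) (hWinv w hw)]
    · ext v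
      obtain ⟨u, hu, w, hw, hsum⟩ := hdec v
      simp only [Module.End.mul_apply]
      rw [← hsum, map_add, map_add, map_add, map_add, hnil u hu, map_zero,
        hnil (ψ u) (hψU u hu), hcomm r w hw, zero_add]
end

section
/- Every finite potent endomorphism φ of a k-vector space V admits a G-Drazin inverse, i.e., there exists an endomorphism ψ of V with φ∘ψ∘φ = φ and ψ∘φ^r = φ^r∘ψ, where r is the index of φ. -/
/-!
With respect to the decomposition `V = U ⊕ W`, `φ` is block diagonal with a nilpotent block on
`U` and an invertible block on `W`. Take `ψ` block diagonal as well: an inner inverse of the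
nilpotent block (every linear map between vector spaces has one) and the inverse of the
invertible block. Both identities can be checked blockwise: on `U` the commutation is `0 = 0`
since `φ ^ r` vanishes there, and on `W` an inverse commutes with every power.
-/

theorem LinearMap.exists_comp_comp_eq_self {K V V' : Type*} [DivisionRing K]
    [AddCommGroup V] [AddCommGroup V'] [Module K V] [Module K V'] (f : V →ₗ[K] V') :
    ∃ g : V' →ₗ[K] V, f ∘ₗ g ∘ₗ f = f := by
  obtain ⟨s, hs⟩ := f.rangeRestrict.exists_rightInverse_of_surjective f.range_rangeRestrict
  obtain ⟨i, hi⟩ := (LinearMap.range f).subtype.exists_leftInverse_of_injective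
    (LinearMap.range f).ker_subtype
  refine ⟨s ∘ₗ i, LinearMap.ext fun x => ?_⟩
  have hix : i (f x) = f.rangeRestrict x := LinearMap.congr_fun hi (f.rangeRestrict x)
  have hfs : ∀ y, f (s y) = y := fun y => congrArg Subtype.val (LinearMap.congr_fun hs y)
  simp only [LinearMap.comp_apply, hix, hfs]
  rfl

def IsGDrazinInverse {M : Type*} [Monoid M] (a b : M) (r : ℕ) : Prop :=
  a * b * a = a ∧ b * a ^ r = a ^ r * b

namespace IsGDrazinInverse

variable {M N : Type*} {r : ℕ}

theorem of_pow_eq_zero [MonoidWithZero M] {a b : M} (hab : a * b * a = a) (ha : a ^ r = 0) :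
    IsGDrazinInverse a b r :=
  ⟨hab, by rw [ha, mul_zero, zero_mul]⟩

theorem prod [Monoid M] [Monoid N] {a b : M} {c d : N} (hab : IsGDrazinInverse a b r)
    (hcd : IsGDrazinInverse c d r) : IsGDrazinInverse (a, c) (b, d) r :=
  ⟨Prod.ext hab.1 hcd.1, Prod.ext hab.2 hcd.2⟩

theorem map {F : Type*} [Monoid M] [Monoid N] [FunLike F M N] [MonoidHomClass F M N] (f : F)
    {a b : M} (h : IsGDrazinInverse a b r) : IsGDrazinInverse (f a) (f b) r := by
  refine ⟨?_, ?_⟩ <;> simp only [← map_mul, ← map_pow, h.1, h.2]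

end IsGDrazinInverse

theorem Units.isGDrazinInverse_inv {M : Type*} [Monoid M] (u : Mˣ) (r : ℕ) :
    IsGDrazinInverse (u : M) ↑u⁻¹ r :=
  ⟨by simp, ((Commute.refl (u : M)).pow_left r).units_inv_right.eq.symm⟩

namespace Submodule

variable {R E : Type*} [Ring R] [AddCommGroup E] [Module R E] {p q : Submodule R E}

noncomputable def prodMapRingHomOfIsCompl (h : IsCompl p q) :
    Module.End R p × Module.End R q →+* Module.End R E :=
  (LinearEquiv.conjRingEquiv (prodEquivOfIsCompl p q h)).toRingHom.comp
    (LinearMap.prodMapRingHom R p q)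

theorem prodMapRingHomOfIsCompl_restrict (h : IsCompl p q) (f : Module.End R E)
    (hp : ∀ x ∈ p, f x ∈ p) (hq : ∀ x ∈ q, f x ∈ q) :
    prodMapRingHomOfIsCompl h (f.restrict hp, f.restrict hq) = f := by
  ext x
  simp [prodMapRingHomOfIsCompl, ← map_add, projection_add_projection_eq_self]

end Submodule

namespace Module.End

variable {R E : Type*} [Ring R] [AddCommGroup E] [Module R E] {p : Submodule R E}

theorem restrict_pow_eq_zero {f : Module.End R E} (hf : ∀ x ∈ p, f x ∈ p) {n : ℕ}
    (h : ∀ x ∈ p, (f ^ n) x = 0) : f.restrict hf ^ n = 0 := by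
  ext x
  rw [pow_restrict]
  simp [h x x.2]

theorem isUnit_restrict {f : Module.End R E} (hf : ∀ x ∈ p, f x ∈ p)
    (hinj : ∀ x ∈ p, f x = 0 → x = 0) (hsurj : ∀ x ∈ p, ∃ y ∈ p, f y = x) :
    IsUnit (f.restrict hf) := by
  refine (isUnit_iff _).2 ⟨?_, fun x => ?_⟩
  · rw [← LinearMap.ker_eq_bot, LinearMap.ker_eq_bot']
    intro x hx
    exact Subtype.ext (hinj x x.2 (congrArg Subtype.val hx))
  · obtain ⟨y, hy, hyx⟩ := hsurj x x.2
    exact ⟨⟨y, hy⟩, Subtype.ext hyx⟩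

end Module.End

theorem stmt2_general {k V : Type*} [Field k] [AddCommGroup V] [Module k V]
    (φ : Module.End k V) (U W : Submodule k V) (r : ℕ)
    (hcompl : IsCompl U W)
    (hUinv : ∀ u ∈ U, φ u ∈ U) (hWinv : ∀ w ∈ W, φ w ∈ W)
    (hnil : ∀ u ∈ U, (φ ^ r) u = 0)
    (hWsurj : ∀ w ∈ W, ∃ w' ∈ W, φ w' = w)
    (hWinj : ∀ w ∈ W, φ w = 0 → w = 0) :
    ∃ ψ : Module.End k V, φ * ψ * φ = φ ∧ ψ * φ ^ r = φ ^ r * ψ := by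
  obtain ⟨ψU, hψU⟩ := (φ.restrict hUinv).exists_comp_comp_eq_self
  have hU : IsGDrazinInverse (φ.restrict hUinv) ψU r :=
    .of_pow_eq_zero hψU (Module.End.restrict_pow_eq_zero hUinv hnil)
  have hW := (Module.End.isUnit_restrict hWinv hWinj hWsurj).unit.isGDrazinInverse_inv r
  have h := (hU.prod hW).map (Submodule.prodMapRingHomOfIsCompl hcompl)
  rw [IsUnit.unit_spec, Submodule.prodMapRingHomOfIsCompl_restrict] at h
  exact ⟨_, h⟩

/-- Every finite potent endomorphism admits a G-Drazin inverse. -/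
theorem stmt2 {k V : Type*} [Field k] [AddCommGroup V] [Module k V]
    (φ : Module.End k V) (U W : Submodule k V) (r : ℕ)
    (hcompl : IsCompl U W)
    (hUinv : ∀ u ∈ U, φ u ∈ U) (hWinv : ∀ w ∈ W, φ w ∈ W)
    (hfin : FiniteDimensional k W)
    (hnil : ∀ u ∈ U, (φ ^ r) u = 0)
    (hmin : ∀ s < r, ∃ u ∈ U, (φ ^ s) u ≠ 0)
    (hWsurj : ∀ w ∈ W, ∃ w' ∈ W, φ w' = w)
    (hWinj : ∀ w ∈ W, φ w = 0 → w = 0) :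
    ∃ ψ : Module.End k V, φ * ψ * φ = φ ∧ ψ * φ ^ r = φ ^ r * ψ :=
  stmt2_general φ U W r hcompl hUinv hWinv hnil hWsurj hWinj
end

section
/- Let φ be a finite potent endomorphism of V with CN-decomposition φ = φ₁ + φ₂ (φ₁ of index ≤ 1, φ₂ nilpotent, φ₁φ₂ = φ₂φ₁ = 0). If ψ is a G-Drazin inverse of φ, then ψ = φ^D + χ, where φ^D is the Drazin inverse of φ and χ is the endomorphism vanishing on W_φ and agreeing with ψ on U_φ; moreover χ is a G-Drazin inverse of φ₂. -/
/-- If `ψ` is a G-Drazin inverse of a finite potent endomorphism `φ` with CN-decomposition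
`φ = φ₁ + φ₂`, then `ψ = φ^D + χ`, where `χ` vanishes on `W_φ` and agrees with `ψ` on `U_φ`;
moreover `χ` is a G-Drazin inverse of `φ₂`. -/
theorem stmt3 {k V : Type*} [Field k] [AddCommGroup V] [Module k V]
    (φ : Module.End k V) (U W : Submodule k V) (r : ℕ)
    (hcompl : IsCompl U W)
    (hUinv : ∀ u ∈ U, φ u ∈ U) (hWinv : ∀ w ∈ W, φ w ∈ W)
    (hfin : FiniteDimensional k W)
    (hnil : ∀ u ∈ U, (φ ^ r) u = 0)
    (hmin : ∀ s < r, ∃ u ∈ U, (φ ^ s) u ≠ 0)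
    (hWsurj : ∀ w ∈ W, ∃ w' ∈ W, φ w' = w)
    (hWinj : ∀ w ∈ W, φ w = 0 → w = 0)
    -- the Drazin inverse `D = φ^D`: `(φ|_W)⁻¹` on `W` and `0` on `U`
    (D : Module.End k V)
    (hDU : ∀ u ∈ U, D u = 0)
    (hDW : ∀ w ∈ W, D w ∈ W ∧ φ (D w) = w)
    -- `ψ` is a G-Drazin inverse of `φ`
    (ψ : Module.End k V)
    (hψ1 : φ * ψ * φ = φ) (hψ2 : ψ * φ ^ r = φ ^ r * ψ)
    -- `χ` vanishes on `W_φ` and agrees with `ψ` on `U_φ`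
    (χ : Module.End k V)
    (hχW : ∀ w ∈ W, χ w = 0) (hχU : ∀ u ∈ U, χ u = ψ u) :
    ψ = D + χ ∧
      ((φ - φ * D * φ) * χ * (φ - φ * D * φ) = φ - φ * D * φ ∧
        χ * (φ - φ * D * φ) ^ r = (φ - φ * D * φ) ^ r * χ) := by
  classical
  -- decomposition of any vector
  have decomp : ∀ v : V, ∃ u ∈ U, ∃ w ∈ W, v = u + w := by
    intro v
    have hv : v ∈ U ⊔ W := by rw [hcompl.sup_eq_top]; trivial
    obtain ⟨u, hu, w, hw, h⟩ := Submodule.mem_sup.1 hv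
    exact ⟨u, hu, w, hw, h.symm⟩
  have hdisj : ∀ x ∈ U, x ∈ W → x = 0 := fun x hx hx' =>
    (Submodule.disjoint_def.1 hcompl.disjoint) x hx hx'
  -- extensionality via the decomposition
  have ext_lemma : ∀ f g : Module.End k V,
      (∀ u ∈ U, f u = g u) → (∀ w ∈ W, f w = g w) → f = g := by
    intro f g hU hW
    ext v
    obtain ⟨u, hu, w, hw, rfl⟩ := decomp v
    simp [map_add, hU u hu, hW w hw]
  -- powers preserve U and W
  have hUpow : ∀ n, ∀ u ∈ U, (φ ^ n) u ∈ U := by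
    intro n
    induction n with
    | zero => simpa using fun u hu => hu
    | succ n ih =>
      intro u hu
      rw [pow_succ, Module.End.mul_apply]
      exact ih _ (hUinv u hu)
  have hWpow : ∀ n, ∀ w ∈ W, (φ ^ n) w ∈ W := by
    intro n
    induction n with
    | zero => simpa using fun w hw => hw
    | succ n ih =>
      intro w hw
      rw [pow_succ, Module.End.mul_apply]
      exact ih _ (hWinv w hw)
  -- φ^n is surjective on W
  have hWsurjpow : ∀ n, ∀ w ∈ W, ∃ w' ∈ W, (φ ^ n) w' = w := by
    intro n
    induction n with
    | zero => exact fun w hw => ⟨w, hw, by simp⟩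
    | succ n ih =>
      intro w hw
      obtain ⟨w1, hw1, hw1eq⟩ := hWsurj w hw
      obtain ⟨w2, hw2, hw2eq⟩ := ih w1 hw1
      exact ⟨w2, hw2, by rw [pow_succ', Module.End.mul_apply, hw2eq, hw1eq]⟩
  -- injectivity of φ on W
  have hWinj' : ∀ a ∈ W, ∀ b ∈ W, φ a = φ b → a = b := by
    intro a ha b hb h
    have : a - b = 0 := hWinj _ (W.sub_mem ha hb) (by rw [map_sub, h, sub_self])
    exact sub_eq_zero.1 this
  -- ψ maps W into W
  have hψW : ∀ w ∈ W, ψ w ∈ W := by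
    intro w hw
    obtain ⟨w', hw', hw'eq⟩ := hWsurjpow r w hw
    obtain ⟨u, hu, w'', hw'', hdec⟩ := decomp (ψ w')
    have : ψ w = (φ ^ r) (ψ w') := by
      rw [← hw'eq, ← Module.End.mul_apply, hψ2, Module.End.mul_apply]
    rw [this, hdec, map_add, hnil u hu, zero_add]
    exact hWpow r _ hw''
  -- ψ = D on W
  have hψD : ∀ w ∈ W, ψ w = D w := by
    intro w hw
    obtain ⟨w', hw', hw'eq⟩ := hWsurj w hw
    have h1 : φ (ψ w) = w := by
      have := congrArg (fun f : Module.End k V => f w') hψ1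
      simpa [Module.End.mul_apply, hw'eq] using this
    exact hWinj' _ (hψW w hw) _ (hDW w hw).1 (by rw [h1, (hDW w hw).2])
  -- the nilpotent part N = φ - φDφ
  set N : Module.End k V := φ - φ * D * φ with hN
  have hNW : ∀ w ∈ W, N w = 0 := by
    intro w hw
    have := (hDW (φ w) (hWinv w hw)).2
    simp [hN, LinearMap.sub_apply, Module.End.mul_apply, this]
  have hNU : ∀ u ∈ U, N u = φ u := by
    intro u hu
    simp [hN, LinearMap.sub_apply, Module.End.mul_apply, hDU (φ u) (hUinv u hu)]
  refine ⟨?_, ?_, ?_⟩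
  · -- ψ = D + χ
    apply ext_lemma
    · intro u hu
      simp [LinearMap.add_apply, hDU u hu, hχU u hu]
    · intro w hw
      simp [LinearMap.add_apply, hχW w hw, hψD w hw]
  · -- N * χ * N = N
    apply ext_lemma
    · intro u hu
      obtain ⟨u', hu', w', hw', hdec⟩ := decomp (ψ (φ u))
      have hφψφ : φ (ψ (φ u)) = φ u := by
        have := congrArg (fun f : Module.End k V => f u) hψ1
        simpa [Module.End.mul_apply] using this
      have hkey : φ u' + φ w' = φ u := by rw [← map_add, ← hdec, hφψφ]
      have hw'0 : φ w' = 0 := by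
        have hmem : φ w' ∈ U := by
          have : φ w' = φ u - φ u' := by rw [← hkey]; abel
          rw [this]; exact U.sub_mem (hUinv u hu) (hUinv u' hu')
        exact hdisj _ hmem (hWinv w' hw')
      have hφu' : φ u' = φ u := by rw [← hkey, hw'0, add_zero]
      calc (N * χ * N) u = N (χ (N u)) := by simp [Module.End.mul_apply]
        _ = N (ψ (φ u)) := by rw [hNU u hu, hχU _ (hUinv u hu)]
        _ = N u' + N w' := by rw [hdec, map_add]
        _ = φ u := by rw [hNU u' hu', hNW w' hw', add_zero, hφu']
        _ = N u := (hNU u hu).symm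
    · intro w hw
      simp [Module.End.mul_apply, hNW w hw, hχW _ W.zero_mem, map_zero]
  · -- χ * N^r = N^r * χ
    rcases Nat.eq_zero_or_pos r with hr | hr
    · simp [hr]
    · -- N^r = 0
      have hNpowU : ∀ n, ∀ u ∈ U, (N ^ n) u = (φ ^ n) u := by
        intro n
        induction n with
        | zero => simp
        | succ n ih =>
          intro u hu
          rw [pow_succ, pow_succ, Module.End.mul_apply, Module.End.mul_apply,
            hNU u hu, ih _ (hUinv u hu)]
      have hNr : N ^ r = 0 := by
        obtain ⟨m, rfl⟩ := Nat.exists_eq_add_of_lt hr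
        apply ext_lemma
        · intro u hu
          rw [hNpowU _ u hu, hnil u hu]; simp
        · intro w hw
          rw [pow_succ, Module.End.mul_apply, hNW w hw, map_zero]; simp
      rw [hNr, mul_zero, zero_mul]
end

section
/- If φ = φ₁ + φ₂ is the CN-decomposition of a finite potent endomorphism φ of a k-vector space V, then the Drazin inverse φ^D of φ is a G-Drazin inverse of φ₁. -/
/-- If `φ = φ₁ + φ₂` is the CN-decomposition of a finite potent endomorphism `φ`,
then the Drazin inverse `φ^D` is a G-Drazin inverse of the core part `φ₁ = φ ∘ φ^D ∘ φ`
(which has index at most 1). -/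
theorem stmt4 {k V : Type*} [Field k] [AddCommGroup V] [Module k V]
    (φ : Module.End k V) (U W : Submodule k V) (r : ℕ)
    (hcompl : IsCompl U W)
    (hUinv : ∀ u ∈ U, φ u ∈ U) (hWinv : ∀ w ∈ W, φ w ∈ W)
    (hfin : FiniteDimensional k W)
    (hnil : ∀ u ∈ U, (φ ^ r) u = 0)
    (hmin : ∀ s < r, ∃ u ∈ U, (φ ^ s) u ≠ 0)
    (hWsurj : ∀ w ∈ W, ∃ w' ∈ W, φ w' = w)
    (hWinj : ∀ w ∈ W, φ w = 0 → w = 0)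
    -- the Drazin inverse `D = φ^D`: `(φ|_W)⁻¹` on `W` and `0` on `U`
    (D : Module.End k V)
    (hDU : ∀ u ∈ U, D u = 0)
    (hDW : ∀ w ∈ W, D w ∈ W ∧ φ (D w) = w) :
    (φ * D * φ) * D * (φ * D * φ) = φ * D * φ ∧
      D * (φ * D * φ) = (φ * D * φ) * D := by
  -- D is a left inverse of φ on W
  have key : ∀ w ∈ W, D (φ w) = w := by
    intro w hw
    have hφw : φ w ∈ W := hWinv w hw
    have h1 := hDW (φ w) hφw
    have hmem : D (φ w) - w ∈ W := W.sub_mem h1.1 hw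
    have hz : φ (D (φ w) - w) = 0 := by rw [map_sub, h1.2, sub_self]
    have := hWinj _ hmem hz
    exact sub_eq_zero.mp this
  -- extensionality via U ⊔ W = ⊤
  have ext2 : ∀ f g : Module.End k V,
      (∀ u ∈ U, f u = g u) → (∀ w ∈ W, f w = g w) → f = g := by
    intro f g hU hW'
    ext v
    have hv : v ∈ U ⊔ W := by rw [hcompl.sup_eq_top]; trivial
    obtain ⟨u, hu, w, hw, rfl⟩ := Submodule.mem_sup.mp hv
    rw [map_add, map_add, hU u hu, hW' w hw]
  -- action of φ₁ = φ D φ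
  have h1u : ∀ u ∈ U, (φ * D * φ) u = 0 := by
    intro u hu
    show φ (D (φ u)) = 0
    rw [hDU _ (hUinv u hu), map_zero]
  have h1w : ∀ w ∈ W, (φ * D * φ) w = φ w := by
    intro w hw
    show φ (D (φ w)) = φ w
    rw [key w hw]
  constructor
  · apply ext2
    · intro u hu
      show (φ * D * φ) (D ((φ * D * φ) u)) = _
      rw [h1u u hu, map_zero]
      exact map_zero _
    · intro w hw
      show (φ * D * φ) (D ((φ * D * φ) w)) = _
      rw [h1w w hw, key w hw]
      exact h1w w hw
  · apply ext2
    · intro u hu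
      show D ((φ * D * φ) u) = (φ * D * φ) (D u)
      rw [h1u u hu, map_zero, hDU u hu, map_zero]
    · intro w hw
      show D ((φ * D * φ) w) = (φ * D * φ) (D w)
      rw [h1w w hw, key w hw, h1w _ (hDW w hw).1, (hDW w hw).2]
end

section
/- Let E be an n-dimensional k-vector space and f an endomorphism of E with f^n = 0 but f^{n−1} ≠ 0, and let e ∈ E with f^{n−1}(e) ≠ 0. Then a linear map g: E → E satisfies f∘g∘f = f if and only if there exist scalars λ₁,…,λ_{n−1} ∈ k and a vector ẽ ∈ E such that g(f^i(e)) = f^{i−1}(e) + λ_i f^{n−1}(e) for all 1 ≤ i ≤ n−1 and g(e) = ẽ. -/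
section Aux

variable {k E : Type*} [Field k] [AddCommGroup E] [Module k E]

/-- The iterates of a cyclic vector are linearly independent. -/
theorem aux_li (n : ℕ) (f : Module.End k E) (hfn : f ^ n = 0)
    (e : E) (he : (f ^ (n - 1)) e ≠ 0) :
    LinearIndependent k (fun i : Fin n => (f ^ (i : ℕ)) e) := by
  have hz : ∀ m, n ≤ m → (f ^ m) e = 0 := by
    intro m hm
    have hm' : f ^ m = f ^ (m - n) * f ^ n := by rw [← pow_add]; congr 1; omega
    rw [hm', hfn, mul_zero]; rfl
  rw [Fintype.linearIndependent_iff]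
  intro c hc
  suffices h : ∀ j, ∀ hj : j < n, c ⟨j, hj⟩ = 0 from fun i => h i i.2
  intro j
  induction j using Nat.strong_induction_on with
  | _ j ih =>
    intro hj
    have key2 : ∑ i : Fin n, c i • (f ^ (n - 1 - j + (i : ℕ))) e = 0 := by
      calc ∑ i : Fin n, c i • (f ^ (n - 1 - j + (i : ℕ))) e
          = (f ^ (n - 1 - j)) (∑ i : Fin n, c i • (f ^ (i : ℕ)) e) := by
            rw [map_sum]
            refine Finset.sum_congr rfl fun i _ => ?_
            rw [map_smul, pow_add, Module.End.mul_apply]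
        _ = 0 := by rw [hc, map_zero]
    rw [Finset.sum_eq_single (⟨j, hj⟩ : Fin n)] at key2
    · have hnj : n - 1 - j + j = n - 1 := by omega
      rw [hnj] at key2
      rcases smul_eq_zero.mp key2 with h | h
      · exact h
      · exact absurd h he
    · intro i _ hij
      have hij' : (i : ℕ) ≠ j := fun h => hij (Fin.ext h)
      rcases lt_or_gt_of_ne hij' with h | h
      · have := ih i h i.2
        have hi : (⟨(i : ℕ), i.2⟩ : Fin n) = i := rfl
        rw [hi] at this
        rw [this, zero_smul]
      · rw [hz _ (by omega), smul_zero]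
    · intro habs; exact absurd (Finset.mem_univ _) habs

/-- The kernel of `f` is spanned by `f^(n-1) e`. -/
theorem aux_ker (n' : ℕ) (hdim : Module.finrank k E = n' + 1)
    (f : Module.End k E) (hfn : f ^ (n' + 1) = 0)
    (e : E) (he : (f ^ n') e ≠ 0) (v : E) (hv : f v = 0) :
    ∃ c : k, v = c • (f ^ n') e := by
  have he' : (f ^ (n' + 1 - 1)) e ≠ 0 := by simpa using he
  have li := aux_li (n' + 1) f hfn e he'
  haveI : FiniteDimensional k E := Module.finite_of_finrank_pos (by omega)
  let B := basisOfLinearIndependentOfCardEqFinrank li (by simp [hdim])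
  have hB : ∀ i : Fin (n' + 1), B i = (f ^ (i : ℕ)) e := fun i => by
    simp [B, coe_basisOfLinearIndependentOfCardEqFinrank]
  set d : Fin (n' + 1) → k := fun i => B.repr v i with hd
  have hrepr : v = ∑ i : Fin (n' + 1), d i • (f ^ (i : ℕ)) e := by
    conv_lhs => rw [← B.sum_repr v]
    exact Finset.sum_congr rfl fun i _ => by rw [hB]
  have hfv : ∑ i : Fin (n' + 1), d i • (f ^ ((i : ℕ) + 1)) e = 0 := by
    calc ∑ i : Fin (n' + 1), d i • (f ^ ((i : ℕ) + 1)) e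
        = f v := by
          conv_rhs => rw [hrepr]
          rw [map_sum]
          refine Finset.sum_congr rfl fun i _ => ?_
          rw [map_smul, pow_succ', Module.End.mul_apply]
      _ = 0 := hv
  -- build coefficient function shifted by one
  set c : Fin (n' + 1) → k := fun m => Fin.cases 0 (fun i => d i.castSucc) m with hcdef
  have hsum : ∑ m : Fin (n' + 1), c m • (f ^ (m : ℕ)) e = 0 := by
    rw [Fin.sum_univ_succ]
    have h0 : c 0 = 0 := rfl
    rw [h0, zero_smul, zero_add]
    have : ∀ i : Fin n', c i.succ • (f ^ ((i.succ : Fin (n' + 1)) : ℕ)) e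
        = d i.castSucc • (f ^ ((i : ℕ) + 1)) e := fun i => rfl
    rw [Finset.sum_congr rfl fun i _ => this i]
    rw [Fin.sum_univ_castSucc] at hfv
    have hlast : d (Fin.last n') • (f ^ ((Fin.last n' : ℕ) + 1)) e = 0 := by
      simp [hfn]
    rw [hlast, add_zero] at hfv
    calc ∑ i : Fin n', d i.castSucc • (f ^ ((i : ℕ) + 1)) e
        = ∑ i : Fin n', d i.castSucc • (f ^ ((i.castSucc : ℕ) + 1)) e := rfl
      _ = 0 := hfv
  have hc0 := (Fintype.linearIndependent_iff.mp li) c hsum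
  have hdz : ∀ i : Fin n', d i.castSucc = 0 := fun i => hc0 i.succ
  refine ⟨d (Fin.last n'), ?_⟩
  rw [hrepr, Fin.sum_univ_castSucc]
  have : ∑ i : Fin n', d i.castSucc • (f ^ ((i.castSucc : Fin (n' + 1)) : ℕ)) e = 0 := by
    refine Finset.sum_eq_zero fun i _ => by rw [hdz, zero_smul]
  rw [this, zero_add]
  rfl

end Aux

/-- Characterization of the generalized inverses of a nilpotent endomorphism of an
`n`-dimensional space with minimal polynomial `x^n`, in terms of a cyclic vector `e`. -/
theorem stmt5 {k E : Type*} [Field k] [AddCommGroup E] [Module k E]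
    [FiniteDimensional k E]
    (n : ℕ) (hn : 1 ≤ n) (hdim : Module.finrank k E = n)
    (f : Module.End k E) (hfn : f ^ n = 0) (hfn1 : f ^ (n - 1) ≠ 0)
    (e : E) (he : (f ^ (n - 1)) e ≠ 0) (g : Module.End k E) :
    f * g * f = f ↔
      ∃ (lam : ℕ → k) (etil : E),
        g e = etil ∧
          ∀ i, 1 ≤ i → i ≤ n - 1 →
            g ((f ^ i) e) = (f ^ (i - 1)) e + lam i • (f ^ (n - 1)) e := by
  obtain ⟨n', rfl⟩ : ∃ n', n = n' + 1 := ⟨n - 1, by omega⟩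
  have hsub : n' + 1 - 1 = n' := rfl
  rw [hsub] at he hfn1 ⊢
  constructor
  · intro h
    have hex : ∀ i, 1 ≤ i → i ≤ n' → ∃ c : k,
        g ((f ^ i) e) = (f ^ (i - 1)) e + c • (f ^ n') e := by
      intro i hi1 hi2
      have hstep : f (g ((f ^ i) e)) = (f ^ i) e := by
        have hfi : (f ^ i) e = f ((f ^ (i - 1)) e) := by
          conv_lhs => rw [show i = (i - 1) + 1 by omega]
          rw [pow_succ', Module.End.mul_apply]
        calc f (g ((f ^ i) e)) = (f * g * f) ((f ^ (i - 1)) e) := by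
              rw [hfi]; rfl
          _ = f ((f ^ (i - 1)) e) := by rw [h]
          _ = (f ^ i) e := hfi.symm
      have hker : f (g ((f ^ i) e) - (f ^ (i - 1)) e) = 0 := by
        rw [map_sub, hstep]
        have : f ((f ^ (i - 1)) e) = (f ^ i) e := by
          conv_rhs => rw [show i = (i - 1) + 1 by omega]
          rw [pow_succ', Module.End.mul_apply]
        rw [this, sub_self]
      obtain ⟨c, hc⟩ := aux_ker n' hdim f hfn e he _ hker
      exact ⟨c, sub_eq_iff_eq_add'.mp hc⟩
    refine ⟨fun i => if hcond : 1 ≤ i ∧ i ≤ n' then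
      Classical.choose (hex i hcond.1 hcond.2) else 0, g e, rfl, ?_⟩
    intro i hi1 hi2
    beta_reduce
    rw [dif_pos ⟨hi1, hi2⟩]
    exact Classical.choose_spec (hex i hi1 hi2)
  · rintro ⟨lam, etil, -, hlam⟩
    have he' : (f ^ (n' + 1 - 1)) e ≠ 0 := by simpa using he
    have li := aux_li (n' + 1) f hfn e he'
    let B := basisOfLinearIndependentOfCardEqFinrank li (by simp [hdim])
    have hB : ∀ i : Fin (n' + 1), B i = (f ^ (i : ℕ)) e := fun i => by
      simp [B, coe_basisOfLinearIndependentOfCardEqFinrank]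
    apply B.ext
    intro i
    rw [hB]
    show f (g (f ((f ^ (i : ℕ)) e))) = f ((f ^ (i : ℕ)) e)
    have hfi : f ((f ^ (i : ℕ)) e) = (f ^ ((i : ℕ) + 1)) e := by
      rw [pow_succ', Module.End.mul_apply]
    rw [hfi]
    rcases lt_or_eq_of_le (Nat.lt_succ_iff.mp i.2) with hlt | heq
    · have hg := hlam ((i : ℕ) + 1) (by omega) (by omega)
      rw [Nat.add_sub_cancel] at hg
      rw [hg, map_add, map_smul, hfi]
      have : f ((f ^ n') e) = 0 := by
        have : f ((f ^ n') e) = (f ^ (n' + 1)) e := by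
          rw [pow_succ', Module.End.mul_apply]
        rw [this, hfn]; rfl
      rw [this, smul_zero, add_zero]
    · have hz : (f ^ ((i : ℕ) + 1)) e = 0 := by
        rw [heq, hfn]; rfl
      rw [hz, map_zero, map_zero]
end

section
/- For a finite potent endomorphism φ of a k-vector space V, the Drazin inverse φ^D is a G-Drazin inverse of φ if and only if the index of φ is at most 1. -/
/-- The Drazin inverse `φ^D` is a G-Drazin inverse of `φ` iff the index of `φ` is at most 1. -/
theorem stmt8 {k V : Type*} [Field k] [AddCommGroup V] [Module k V]
    (φ : Module.End k V) (U W : Submodule k V) (r : ℕ)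
    (hcompl : IsCompl U W)
    (hUinv : ∀ u ∈ U, φ u ∈ U) (hWinv : ∀ w ∈ W, φ w ∈ W)
    (hfin : FiniteDimensional k W)
    (hnil : ∀ u ∈ U, (φ ^ r) u = 0)
    (hmin : ∀ s < r, ∃ u ∈ U, (φ ^ s) u ≠ 0)
    (hWsurj : ∀ w ∈ W, ∃ w' ∈ W, φ w' = w)
    (hWinj : ∀ w ∈ W, φ w = 0 → w = 0)
    (D : Module.End k V)
    (hDU : ∀ u ∈ U, D u = 0)
    (hDW : ∀ w ∈ W, D w ∈ W ∧ φ (D w) = w) :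
    (φ * D * φ = φ ∧ D * φ ^ r = φ ^ r * D) ↔ r ≤ 1 := by
  have hUpow : ∀ n : ℕ, ∀ u ∈ U, (φ ^ n) u ∈ U := by
    intro n
    induction n with
    | zero => intro u hu; simpa using hu
    | succ m ih =>
      intro u hu
      have : (φ ^ (m + 1)) u = (φ ^ m) (φ u) := by
        rw [pow_succ, Module.End.mul_apply]
      rw [this]
      exact ih _ (hUinv u hu)
  have hWpow : ∀ n : ℕ, ∀ w ∈ W, (φ ^ n) w ∈ W := by
    intro n
    induction n with
    | zero => intro w hw; simpa using hw
    | succ m ih =>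
      intro w hw
      have : (φ ^ (m + 1)) w = (φ ^ m) (φ w) := by
        rw [pow_succ, Module.End.mul_apply]
      rw [this]
      exact ih _ (hWinv w hw)
  have hdecomp : ∀ v : V, ∃ u ∈ U, ∃ w ∈ W, v = u + w := by
    intro v
    have : v ∈ U ⊔ W := by rw [hcompl.sup_eq_top]; trivial
    obtain ⟨u, hu, w, hw, h⟩ := Submodule.mem_sup.mp this
    exact ⟨u, hu, w, hw, h.symm⟩
  constructor
  · rintro ⟨h1, _⟩
    by_contra h
    push_neg at h
    obtain ⟨u, hu, hune⟩ := hmin 1 h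
    apply hune
    have := LinearMap.congr_fun h1 u
    simp only [Module.End.mul_apply] at this
    rw [hDU (φ u) (hUinv u hu), map_zero] at this
    rw [pow_one]
    exact this.symm
  · intro hr
    have hphiU : ∀ u ∈ U, φ u = 0 := by
      intro u hu
      interval_cases r
      · have : (φ ^ 0) u = 0 := hnil u hu
        simp only [pow_zero, Module.End.one_apply] at this
        rw [this, map_zero]
      · have := hnil u hu
        rwa [pow_one] at this
    constructor
    · ext v
      obtain ⟨u, hu, w, hw, rfl⟩ := hdecomp v
      simp only [Module.End.mul_apply, map_add]
      rw [hphiU u hu, map_zero, map_zero]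
      rw [(hDW (φ w) (hWinv w hw)).2]
    · ext v
      obtain ⟨u, hu, w, hw, rfl⟩ := hdecomp v
      simp only [Module.End.mul_apply, map_add]
      rw [hnil u hu, hDU u hu, map_zero, map_zero, zero_add, zero_add]
      -- goal : D ((φ ^ r) w) = (φ ^ r) (D w)
      have hmem : D ((φ ^ r) w) - (φ ^ r) (D w) ∈ W :=
        Submodule.sub_mem _ ((hDW _ (hWpow r w hw)).1) (hWpow r _ (hDW w hw).1)
      have hzero : φ (D ((φ ^ r) w) - (φ ^ r) (D w)) = 0 := by
        rw [map_sub, (hDW _ (hWpow r w hw)).2]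
        have : φ ((φ ^ r) (D w)) = (φ ^ r) (φ (D w)) := by
          have : φ * φ ^ r = φ ^ r * φ := by rw [← pow_succ, ← pow_succ']
          exact LinearMap.congr_fun this (D w)
        rw [this, (hDW w hw).2, sub_self]
      exact sub_eq_zero.mp (hWinj _ hmem hzero)
end

section
/- Let A be an n×n matrix over ℂ with index r. Then an n×n matrix X satisfies AXA = A, XA^{r+1} = A^r and A^{r+1}X = A^r if and only if X satisfies AXA = A and XA^r = A^r X. -/
lemma aux_isUnit {n : ℕ} (A : Matrix (Fin n) (Fin n) ℂ)
    (h : A.rank = n) : IsUnit A := by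
  rw [← Matrix.mulVec_surjective_iff_isUnit]
  have htop : LinearMap.range A.mulVecLin = ⊤ := by
    apply Submodule.eq_top_of_finrank_eq
    rw [← Matrix.rank, h]
    simp [Module.finrank_fintype_fun_eq_card]
  intro v
  obtain ⟨w, hw⟩ := htop ▸ Submodule.mem_top (x := v) (R := ℂ)
  exact ⟨w, hw⟩

lemma aux_inv0 {n : ℕ} (A X : Matrix (Fin n) (Fin n) ℂ)
    (hr : (A ^ 0).rank = (A ^ (0 + 1)).rank) (h1 : A * X * A = A) :
    X * A ^ (0 + 1) = A ^ 0 ∧ A ^ (0 + 1) * X = A ^ 0 := by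
  have hA : IsUnit A := by
    apply aux_isUnit
    rw [← pow_one A]
    have := hr.symm
    rw [zero_add, pow_zero, Matrix.rank_one, Fintype.card_fin] at this
    rw [pow_one] at this ⊢
    exact this
  obtain ⟨u, hu⟩ := hA
  have hinv : A * (↑u⁻¹ : Matrix (Fin n) (Fin n) ℂ) = 1 := by
    rw [← hu, ← Units.val_mul, mul_inv_cancel, Units.val_one]
  have hinv' : (↑u⁻¹ : Matrix (Fin n) (Fin n) ℂ) * A = 1 := by
    rw [← hu, ← Units.val_mul, inv_mul_cancel, Units.val_one]
  constructor
  · calc X * A ^ (0 + 1) = ↑u⁻¹ * (A * X * A) := by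
          rw [zero_add, pow_one, ← mul_assoc, ← mul_assoc, hinv', one_mul]
      _ = ↑u⁻¹ * A := by rw [h1]
      _ = A ^ 0 := by rw [hinv', pow_zero]
  · calc A ^ (0 + 1) * X = (A * X * A) * ↑u⁻¹ := by
          rw [zero_add, pow_one, mul_assoc, mul_assoc, hinv, mul_one]
      _ = A * ↑u⁻¹ := by rw [h1]
      _ = A ^ 0 := by rw [hinv, pow_zero]

/-- For a complex square matrix `A` of index `r`, `X` solves the Wang–Liu system
(`AXA = A`, `XA^(r+1) = A^r`, `A^(r+1)X = A^r`) iff `AXA = A` and `XA^r = A^r X`. -/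
theorem stmt10 {n : ℕ} (A X : Matrix (Fin n) (Fin n) ℂ) (r : ℕ)
    (hr : (A ^ r).rank = (A ^ (r + 1)).rank)
    (hmin : ∀ s < r, (A ^ s).rank ≠ (A ^ (s + 1)).rank) :
    (A * X * A = A ∧ X * A ^ (r + 1) = A ^ r ∧ A ^ (r + 1) * X = A ^ r) ↔
      (A * X * A = A ∧ X * A ^ r = A ^ r * X) := by
  constructor
  · rintro ⟨h1, h2, h3⟩
    refine ⟨h1, ?_⟩
    calc X * A ^ r = X * (A ^ (r + 1) * X) := by rw [h3]
      _ = (X * A ^ (r + 1)) * X := by rw [mul_assoc]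
      _ = A ^ r * X := by rw [h2]
  · rintro ⟨h1, h2⟩
    refine ⟨h1, ?_, ?_⟩
    · rcases r with _ | s
      · exact (aux_inv0 A X hr h1).1
      · calc X * A ^ (s + 1 + 1) = (X * A ^ (s + 1)) * A := by rw [mul_assoc, ← pow_succ]
          _ = A ^ (s + 1) * X * A := by rw [h2]
          _ = A ^ s * (A * X * A) := by
              simp only [pow_succ, mul_assoc]
          _ = A ^ s * A := by rw [h1]
          _ = A ^ (s + 1) := by rw [pow_succ]
    · rcases r with _ | s
      · exact (aux_inv0 A X hr h1).2
      · calc A ^ (s + 1 + 1) * X = A * (A ^ (s + 1) * X) := by rw [← mul_assoc, ← pow_succ']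
          _ = A * (X * A ^ (s + 1)) := by rw [h2]
          _ = (A * X * A) * A ^ s := by
              simp only [pow_succ', mul_assoc]
          _ = A * A ^ s := by rw [h1]
          _ = A ^ (s + 1) := by rw [pow_succ']
end

section
/- Let A be an n×n matrix over a field k with index r, and suppose A = P · diag(A_W, J_U) · P^{−1} where P is invertible, A_W is invertible, and J_U is nilpotent of nilpotency index r. Then for any matrix N with J_U N J_U = J_U, the matrix X = P · diag(A_W^{−1}, N) · P^{−1} is a G-Drazin inverse of A, i.e., AXA = A and XA^r = A^r X. -/
/-- If `A = P ⬝ diag(A_W, J_U) ⬝ P⁻¹` with `A_W` invertible and `J_U` nilpotent of index `r`,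
then for any `N` with `J_U N J_U = J_U`, the matrix `X = P ⬝ diag(A_W⁻¹, N) ⬝ P⁻¹` is a
G-Drazin inverse of `A`. -/
theorem stmt11 {k : Type*} [Field k] {m p : ℕ} (r : ℕ) (hr : 1 ≤ r)
    (A P Q : Matrix (Fin m ⊕ Fin p) (Fin m ⊕ Fin p) k)
    (A_W : Matrix (Fin m) (Fin m) k) (J_U N : Matrix (Fin p) (Fin p) k)
    (hPQ : P * Q = 1) (hQP : Q * P = 1)
    (hA : A = P * Matrix.fromBlocks A_W 0 0 J_U * Q)
    (hAW : IsUnit A_W.det)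
    (hJr : J_U ^ r = 0) (hJr1 : J_U ^ (r - 1) ≠ 0)
    (hN : J_U * N * J_U = J_U) :
    A * (P * Matrix.fromBlocks A_W⁻¹ 0 0 N * Q) * A = A ∧
      (P * Matrix.fromBlocks A_W⁻¹ 0 0 N * Q) * A ^ r =
        A ^ r * (P * Matrix.fromBlocks A_W⁻¹ 0 0 N * Q) := by
  have hmul : ∀ B C : Matrix (Fin m ⊕ Fin p) (Fin m ⊕ Fin p) k,
      (P * B * Q) * (P * C * Q) = P * (B * C) * Q := by
    intro B C
    simp only [mul_assoc]
    rw [← mul_assoc Q P, hQP, one_mul]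
  have hinv : A_W * A_W⁻¹ = 1 := Matrix.mul_nonsing_inv _ hAW
  have hinv' : A_W⁻¹ * A_W = 1 := Matrix.nonsing_inv_mul _ hAW
  have hpow : ∀ t : ℕ, 1 ≤ t → A ^ t = P * Matrix.fromBlocks (A_W ^ t) 0 0 (J_U ^ t) * Q := by
    intro t ht
    induction t with
    | zero => omega
    | succ s ih =>
      rcases Nat.eq_zero_or_pos s with hs | hs
      · subst hs; simpa using hA
      · rw [pow_succ, ih hs, hA, hmul, Matrix.fromBlocks_multiply]
        simp [← pow_succ]
  have hAr : A ^ r = P * Matrix.fromBlocks (A_W ^ r) 0 0 0 * Q := by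
    rw [hpow r hr, hJr]
  constructor
  · rw [hA, hmul, hmul, Matrix.fromBlocks_multiply, Matrix.fromBlocks_multiply]
    simp [hinv, ← Matrix.mul_assoc, hN]
  · rw [hAr, hmul, hmul, Matrix.fromBlocks_multiply, Matrix.fromBlocks_multiply]
    congr 2
    simp only [Matrix.mul_zero, Matrix.zero_mul, Matrix.mul_one, Matrix.one_mul,
      add_zero, zero_add, Matrix.mul_zero]
    congr 1
    have hc : Commute A_W A_W⁻¹ := hinv.trans hinv'.symm
    have : A_W⁻¹ * A_W ^ r = A_W ^ r * A_W⁻¹ := (hc.symm.pow_right r).eq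
    simp [Matrix.fromBlocks, this]
end

section
/- Let φ be a finite potent endomorphism of V with index r and let ψ be a G-Drazin inverse of φ. Then ψ restricted to W_φ equals the inverse of φ|_{W_φ}. -/
/-- A G-Drazin inverse `ψ` of a finite potent endomorphism `φ` restricts on `W_φ` to the
inverse of `φ|_{W_φ}`. -/
theorem stmt12 {k V : Type*} [Field k] [AddCommGroup V] [Module k V]
    (φ : Module.End k V) (U W : Submodule k V) (r : ℕ)
    (hcompl : IsCompl U W)
    (hUinv : ∀ u ∈ U, φ u ∈ U) (hWinv : ∀ w ∈ W, φ w ∈ W)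
    (hfin : FiniteDimensional k W)
    (hnil : ∀ u ∈ U, (φ ^ r) u = 0)
    (hmin : ∀ s < r, ∃ u ∈ U, (φ ^ s) u ≠ 0)
    (hWsurj : ∀ w ∈ W, ∃ w' ∈ W, φ w' = w)
    (hWinj : ∀ w ∈ W, φ w = 0 → w = 0)
    (ψ : Module.End k V)
    (hψ1 : φ * ψ * φ = φ) (hψ2 : ψ * φ ^ r = φ ^ r * ψ) :
    ∀ w ∈ W, ψ w ∈ W ∧ φ (ψ w) = w ∧ ψ (φ w) = w := by
  -- iterated surjectivity of φ on W
  have hsurj : ∀ n : ℕ, ∀ w ∈ W, ∃ u ∈ W, (φ ^ n) u = w := by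
    intro n
    induction n with
    | zero => intro w hw; exact ⟨w, hw, rfl⟩
    | succ n ih =>
      intro w hw
      obtain ⟨u, hu, hu2⟩ := ih w hw
      obtain ⟨u', hu', hu'2⟩ := hWsurj u hu
      refine ⟨u', hu', ?_⟩
      rw [pow_succ, Module.End.mul_apply]
      show (φ ^ n) (φ u') = w
      rw [hu'2, hu2]
  -- W is stable under φ^n
  have hWpow : ∀ n : ℕ, ∀ w ∈ W, (φ ^ n) w ∈ W := by
    intro n
    induction n with
    | zero => intro w hw; exact hw
    | succ n ih =>
      intro w hw
      rw [pow_succ, Module.End.mul_apply]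
      exact ih _ (hWinv w hw)
  -- ψ W ⊆ W
  have hψW : ∀ w ∈ W, ψ w ∈ W := by
    intro w hw
    obtain ⟨u, hu, hu2⟩ := hsurj r w hw
    -- decompose ψ u = a + b
    obtain ⟨a, ha, b, hb, hab⟩ := Submodule.mem_sup.mp
      (by rw [hcompl.sup_eq_top]; exact Submodule.mem_top : ψ u ∈ U ⊔ W)
    have h1 : ψ w = (φ ^ r) (ψ u) := by
      rw [← hu2]
      have := DFunLike.congr_fun hψ2 u
      exact this
    rw [h1, ← hab, map_add, hnil a ha, zero_add]
    exact hWpow r b hb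
  -- φ (ψ w) = w for w ∈ W
  have hright : ∀ w ∈ W, φ (ψ w) = w := by
    intro w hw
    obtain ⟨w', hw', hw'2⟩ := hWsurj w hw
    have := DFunLike.congr_fun hψ1 w'
    simp only [Module.End.mul_apply] at this
    rw [← hw'2, this]
  intro w hw
  refine ⟨hψW w hw, hright w hw, ?_⟩
  have h1 : ψ (φ w) ∈ W := hψW _ (hWinv w hw)
  have h2 : φ (ψ (φ w)) = φ w := hright _ (hWinv w hw)
  have h3 : φ (ψ (φ w) - w) = 0 := by rw [map_sub, h2, sub_self]
  have h4 := hWinj _ (Submodule.sub_mem W h1 hw) h3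
  have := sub_eq_zero.mp h4
  exact this
end

section
/- Let f be a nilpotent endomorphism of a finite-dimensional k-vector space E with minimal polynomial x^n and Jordan basis ∪_{j=1}^r {e_j, f(e_j), …, f^{n_j−1}(e_j)}. Then a linear map g: E → E satisfies f∘g∘f = f if and only if there exist scalars λ_{j,i}^s and vectors w_j ∈ E such that g(f^i(e_j)) = f^{i−1}(e_j) + Σ_{s=1}^r λ_{j,i}^s f^{n_s−1}(e_s) for 1 ≤ i ≤ n_j−1, and g(e_j) = w_j for all j. -/
/-!
`f g f = f` says exactly that `g (f y) - y ∈ ker f` for every `y`, and it suffices to check this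
on a spanning family. Along each Jordan chain `f` shifts basis vectors one step and kills the
last one, so the kernel of `f` is spanned by the chain ends `f^(n_s - 1) e_s`. On the chain vector
`f^(i-1) e_j` the condition therefore reads: `g (f^i e_j)` equals `f^(i-1) e_j` up to a combination
of chain ends, while for the end of a chain it holds automatically.
-/

open Submodule LinearMap

section GeneralizedInverse

variable {R M : Type*} [Ring R] [AddCommGroup M] [Module R M] (f g : Module.End R M)

theorem mul_mul_eq_self_iff_sub_mem_ker : f * g * f = f ↔ ∀ y, g (f y) - y ∈ ker f := by
  simp only [mem_ker, map_sub, sub_eq_zero, LinearMap.ext_iff, Module.End.mul_apply]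

theorem mul_mul_eq_self_of_span {ι : Type*} {v : ι → M} (hv : span R (Set.range v) = ⊤)
    (h : ∀ i, g (f (v i)) - v i ∈ ker f) : f * g * f = f :=
  LinearMap.ext_on_range hv fun i => by simpa [sub_eq_zero] using h i

end GeneralizedInverse

section JordanChains

variable {R E : Type*} [Ring R] [AddCommGroup E] [Module R E] (f : Module.End R E)

theorem pow_pred_apply_mem_ker {n : ℕ} {x : E} (hx : (f ^ n) x = 0) :
    (f ^ (n - 1)) x ∈ ker f := by
  cases n with
  | zero => simp_all
  | succ m => rwa [mem_ker, ← Module.End.mul_apply, ← pow_succ']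

variable {ι : Type*} {n : ι → ℕ} {e : ι → E} (B : Module.Basis (Σ j, Fin (n j)) R E)
  (hB : ∀ q, B q = (f ^ (q.2 : ℕ)) (e q.1)) (hchain : ∀ j, (f ^ n j) (e j) = 0)
include hB hchain

theorem repr_apply_succ_of_chain (x : E) {j : ι} {i : ℕ} (h : i + 1 < n j) :
    B.repr (f x) ⟨j, ⟨i + 1, h⟩⟩ = B.repr x ⟨j, ⟨i, by omega⟩⟩ := by
  suffices B.coord ⟨j, ⟨i + 1, h⟩⟩ ∘ₗ f = B.coord ⟨j, ⟨i, by omega⟩⟩ from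
    LinearMap.congr_fun this x
  classical
  refine B.ext fun ⟨j', i'⟩ => ?_
  rw [LinearMap.comp_apply, Module.Basis.coord_apply, Module.Basis.coord_apply,
    Module.Basis.repr_self]
  rcases (show (i' : ℕ) + 1 ≤ n j' from i'.isLt).lt_or_eq with hlt | heq
  · have hshift : f (B ⟨j', i'⟩) = B ⟨j', ⟨i' + 1, hlt⟩⟩ := by
      rw [hB, hB, ← Module.End.mul_apply, ← pow_succ']
    rw [hshift, Module.Basis.repr_self]
    by_cases hj : j' = j
    · subst hj; simp [Finsupp.single_apply, Fin.ext_iff]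
    · simp [hj]
  · have hend : f (B ⟨j', i'⟩) = 0 := by
      rw [hB, ← Module.End.mul_apply, ← pow_succ', heq, hchain]
    rw [hend, map_zero, Finsupp.zero_apply, Finsupp.single_apply]
    by_cases hj : j' = j
    · subst hj; simp only [Sigma.mk.inj_iff, heq_eq_eq, true_and, Fin.ext_iff]
      exact (if_neg (by omega)).symm
    · simp [hj]

theorem ker_le_span_chain_ends : ker f ≤ span R (Set.range fun j => (f ^ (n j - 1)) (e j)) := by
  intro x hx
  refine span_mono ?_ (B.mem_span_repr_support x)
  rintro _ ⟨⟨j, i⟩, hq, rfl⟩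
  have hend : (i : ℕ) + 1 = n j := by
    by_contra hne
    apply Finsupp.mem_support_iff.mp hq
    rw [← repr_apply_succ_of_chain f B hB hchain x (by omega), mem_ker.mp hx, map_zero,
      Finsupp.zero_apply]
  refine ⟨j, ?_⟩
  rw [hB]
  show (f ^ (n j - 1)) (e j) = (f ^ (i : ℕ)) (e j)
  rw [show n j - 1 = i by omega]

end JordanChains

theorem stmt16_general {k E : Type*} [Field k] [AddCommGroup E] [Module k E]
    (f : Module.End k E) (r : ℕ) (nlen : Fin r → ℕ) (e : Fin r → E)
    (hchain : ∀ j, (f ^ (nlen j)) (e j) = 0)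
    (hli : LinearIndependent k
      (fun q : Σ j : Fin r, Fin (nlen j) => (f ^ (q.2 : ℕ)) (e q.1)))
    (hspan : Submodule.span k
      (Set.range fun q : Σ j : Fin r, Fin (nlen j) => (f ^ (q.2 : ℕ)) (e q.1)) = ⊤)
    (g : Module.End k E) :
    f * g * f = f ↔
      ∃ (lam : Fin r → ℕ → Fin r → k) (w : Fin r → E),
        (∀ j, g (e j) = w j) ∧
          ∀ j, ∀ i, 1 ≤ i → i ≤ nlen j - 1 →
            g ((f ^ i) (e j)) =
              (f ^ (i - 1)) (e j) + ∑ s, lam j i s • (f ^ (nlen s - 1)) (e s) := by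
  have hend : ∀ s, (f ^ (nlen s - 1)) (e s) ∈ ker f :=
    fun s => pow_pred_apply_mem_ker f (hchain s)
  constructor
  · intro h
    have hker := ker_le_span_chain_ends f (Module.Basis.mk hli hspan.ge)
      (Module.Basis.mk_apply hli _) hchain
    have hstep : ∀ j i, ∃ c : Fin r → k, g ((f ^ (i + 1)) (e j)) =
        (f ^ i) (e j) + ∑ s, c s • (f ^ (nlen s - 1)) (e s) := fun j i => by
      obtain ⟨c, hc⟩ := (mem_span_range_iff_exists_fun k).mp
        (hker ((mul_mul_eq_self_iff_sub_mem_ker f g).mp h ((f ^ i) (e j))))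
      exact ⟨c, by rw [hc, pow_succ', Module.End.mul_apply, add_sub_cancel]⟩
    choose c hc using hstep
    refine ⟨fun j i => c j (i - 1), fun j => g (e j), fun j => rfl, fun j i hi _ => ?_⟩
    obtain ⟨i, rfl⟩ := Nat.exists_eq_add_of_le' hi
    simpa using hc j i
  · rintro ⟨lam, -, -, hg⟩
    refine mul_mul_eq_self_of_span f g hspan fun ⟨j, i⟩ => ?_
    dsimp only
    rw [← Module.End.mul_apply f, ← pow_succ']
    by_cases hi : (i : ℕ) + 1 ≤ nlen j - 1
    · rw [hg j _ le_add_self hi, Nat.add_sub_cancel, add_sub_cancel_left]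
      exact sum_mem fun s _ => smul_mem _ _ (hend s)
    · have hlast : (i : ℕ) = nlen j - 1 := by omega
      rw [hlast, Nat.sub_add_cancel (by omega), hchain, map_zero, zero_sub]
      exact neg_mem (hend j)

/-- Characterization of the generalized inverses of a nilpotent endomorphism of a
finite-dimensional space in terms of a Jordan basis made of `r` chains of lengths `n_j`
generated by vectors `e_j`. -/
theorem stmt16 {k E : Type*} [Field k] [AddCommGroup E] [Module k E]
    [FiniteDimensional k E]
    (f : Module.End k E) (r : ℕ) (nlen : Fin r → ℕ) (e : Fin r → E)
    (hlen : ∀ j, 1 ≤ nlen j)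
    (hchain : ∀ j, (f ^ (nlen j)) (e j) = 0)
    (hli : LinearIndependent k
      (fun q : Σ j : Fin r, Fin (nlen j) => (f ^ (q.2 : ℕ)) (e q.1)))
    (hspan : Submodule.span k
      (Set.range fun q : Σ j : Fin r, Fin (nlen j) => (f ^ (q.2 : ℕ)) (e q.1)) = ⊤)
    (g : Module.End k E) :
    f * g * f = f ↔
      ∃ (lam : Fin r → ℕ → Fin r → k) (w : Fin r → E),
        (∀ j, g (e j) = w j) ∧
          ∀ j, ∀ i, 1 ≤ i → i ≤ nlen j - 1 →
            g ((f ^ i) (e j)) =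
              (f ^ (i - 1)) (e j) + ∑ s, lam j i s • (f ^ (nlen s - 1)) (e s) :=
  stmt16_general f r nlen e hchain hli hspan g
end

section
/- Let φ be a finite potent endomorphism of V and ψ a G-Drazin inverse of φ that is itself finite potent with W_ψ = W_φ. Then the Tate trace satisfies tr_V(ψ) = tr_V(φ^D), where φ^D is the Drazin inverse of φ. -/
/-- If `ψ` is a G-Drazin inverse of `φ` which is itself finite potent with `W_ψ = W_φ`,
then the Tate traces agree: `tr_V ψ = tr_V φ^D`, i.e. the traces of the restrictions to
`W_φ` coincide. -/
theorem stmt17 {k V : Type*} [Field k] [AddCommGroup V] [Module k V]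
    (φ : Module.End k V) (U W : Submodule k V) (r : ℕ)
    (hcompl : IsCompl U W)
    (hUinv : ∀ u ∈ U, φ u ∈ U) (hWinv : ∀ w ∈ W, φ w ∈ W)
    (hfin : FiniteDimensional k W)
    (hnil : ∀ u ∈ U, (φ ^ r) u = 0)
    (hmin : ∀ s < r, ∃ u ∈ U, (φ ^ s) u ≠ 0)
    (hWsurj : ∀ w ∈ W, ∃ w' ∈ W, φ w' = w)
    (hWinj : ∀ w ∈ W, φ w = 0 → w = 0)
    -- the Drazin inverse `D = φ^D`
    (D : Module.End k V)
    (hDU : ∀ u ∈ U, D u = 0)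
    (hDWmem : ∀ w ∈ W, D w ∈ W)
    (hDWinv : ∀ w ∈ W, φ (D w) = w)
    -- `ψ` is a G-Drazin inverse of `φ`
    (ψ : Module.End k V)
    (hψ1 : φ * ψ * φ = φ) (hψ2 : ψ * φ ^ r = φ ^ r * ψ)
    -- `ψ` is finite potent with AST-decomposition `V = U' ⊕ W`, i.e. `W_ψ = W_φ`
    (U' : Submodule k V)
    (hcompl' : IsCompl U' W)
    (hψU'inv : ∀ u ∈ U', ψ u ∈ U')
    (hψWmem : ∀ w ∈ W, ψ w ∈ W)
    (hψnil : ∃ m : ℕ, ∀ u ∈ U', (ψ ^ m) u = 0)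
    (hψWsurj : ∀ w ∈ W, ∃ w' ∈ W, ψ w' = w)
    (hψWinj : ∀ w ∈ W, ψ w = 0 → w = 0) :
    LinearMap.trace k W (ψ.restrict hψWmem) = LinearMap.trace k W (D.restrict hDWmem) := by
  have key : ∀ w ∈ W, ψ w = D w := by
    intro w hw
    obtain ⟨w', hw', hφw'⟩ := hWsurj w hw
    have h1 : φ (ψ w) = w := by
      have := congrArg (fun f : Module.End k V => f w') hψ1
      simpa [Module.End.mul_apply, hφw'] using this
    have h2 : φ (D w) = w := hDWinv w hw
    have hmem : ψ w - D w ∈ W := W.sub_mem (hψWmem w hw) (hDWmem w hw)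
    have : φ (ψ w - D w) = 0 := by rw [map_sub, h1, h2, sub_self]
    exact sub_eq_zero.mp (hWinj _ hmem this)
  have : ψ.restrict hψWmem = D.restrict hDWmem := by
    ext ⟨w, hw⟩
    simpa [LinearMap.restrict_apply] using key w hw
  rw [this]
end
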